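/- Let M be a right H-Hopf module algebra over a Hopf algebra H. Then (M, P_R) with P_R(m) = m_(0)·S(m_(1)) is a Rota-Baxter algebra of weight −1: P_R(x)P_R(y) = P_R(xP_R(y)) + P_R(P_R(x)y) − P_R(xy) for all x, y ∈ M. -/

import Mathlib

open TensorProduct LinearMap

/-- A right Hopf module over a Hopf algebra `H`: `act` is a right `H`-module structure,
`ρ` is a right `H`-comodule structure, and the compatibility `ρ (m · h) = ρ(m) Δ(h)` holds. -/
def IsRightHopfModule (K : Type*) [Field K] (H : Type*) [Ring H] [HopfAlgebra K H]
    {M : Type*} [AddCommGroup M] [Module K M]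
    (act : M ⊗[K] H →ₗ[K] M) (ρ : M →ₗ[K] M ⊗[K] H) : Prop :=
  -- right module axioms
  (∀ (m : M) (h h' : H), act (act (m ⊗ₜ[K] h) ⊗ₜ[K] h') = act (m ⊗ₜ[K] (h * h'))) ∧
  (∀ m : M, act (m ⊗ₜ[K] (1 : H)) = m) ∧
  -- right comodule axioms: coassociativity and counitality
  (rTensor H ρ ∘ₗ ρ =
    (TensorProduct.assoc K M H H).symm.toLinearMap ∘ₗ lTensor M (Coalgebra.comul (R := K)) ∘ₗ ρ) ∧
  (∀ m : M, (TensorProduct.rid K M) ((lTensor M (Coalgebra.counit (R := K))) (ρ m)) = m) ∧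
  -- Hopf module compatibility: ρ(m·h) = m₍₀₎·h₁ ⊗ m₍₁₎h₂
  (ρ ∘ₗ act =
    TensorProduct.map act (LinearMap.mul' K H) ∘ₗ
      (tensorTensorTensorComm K M H H H).toLinearMap ∘ₗ
        TensorProduct.map ρ (Coalgebra.comul (R := K)))

/-- A right `H`-Hopf module algebra: a right Hopf module `M` with an associative
multiplication `mul` satisfying `(mm')·h = m(m'·h)` and `ρ(mm') = m₍₀₎m'₍₀₎ ⊗ m₍₁₎m'₍₁₎`. -/
def IsRightHopfModuleAlgebra (K : Type*) [Field K] (H : Type*) [Ring H] [HopfAlgebra K H]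
    {M : Type*} [AddCommGroup M] [Module K M]
    (act : M ⊗[K] H →ₗ[K] M) (ρ : M →ₗ[K] M ⊗[K] H) (mul : M ⊗[K] M →ₗ[K] M) : Prop :=
  IsRightHopfModule K H act ρ ∧
  -- associativity
  (∀ a b c : M, mul (mul (a ⊗ₜ[K] b) ⊗ₜ[K] c) = mul (a ⊗ₜ[K] mul (b ⊗ₜ[K] c))) ∧
  -- (mm')·h = m(m'·h)
  (act ∘ₗ rTensor H mul = mul ∘ₗ lTensor M act ∘ₗ (TensorProduct.assoc K M M H).toLinearMap) ∧
  -- ρ(mm') = m₍₀₎m'₍₀₎ ⊗ m₍₁₎m'₍₁₎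
  (ρ ∘ₗ mul = TensorProduct.map mul (LinearMap.mul' K H) ∘ₗ
    (tensorTensorTensorComm K M H M H).toLinearMap ∘ₗ TensorProduct.map ρ ρ)

open Coalgebra WithConv

/-!
`P(m) = m₀ · S(m₁)` takes values in the coinvariants, `ρ (P m) = P m ⊗ 1`; this comes down to the
Hopf algebra identity `S(h₂)₁ ⊗ h₁ S(h₂)₂ = S(h) ⊗ 1`. A coinvariant factor can be pulled out of
`P` on the left, so `P (P x · y) = P x · P y`; and since `S` is an antihomomorphism,
`P (x · y) = (x₀ · P y) · S(x₁) = P (x · P y)`. The right-hand side of the Rota–Baxter identity is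
therefore `P (x · y) + P x · P y - P (x · y)`.
-/

open Algebra.TensorProduct (includeLeft includeRight)

namespace HopfAlgebra

variable {R H : Type*} [CommSemiring R] [Semiring H] [HopfAlgebra R H]

theorem includeRight_convMul_comul_comp_antipode :
    toConv (includeRight : H →ₐ[R] H ⊗[R] H).toLinearMap * toConv (comul ∘ₗ antipode R) =
      toConv ((includeLeft : H →ₐ[R] H ⊗[R] H).toLinearMap ∘ₗ antipode R) := by
  set iL := (includeLeft : H →ₐ[R] H ⊗[R] H).toLinearMap
  set iR := (includeRight : H →ₐ[R] H ⊗[R] H).toLinearMap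
  have hL : toConv (iL ∘ₗ antipode R) * toConv iL = 1 := by
    ext h
    rw [(ℛ R h).convMul_apply]
    simp [iL, ← sum_antipode_mul_eq_algebraMap_counit (ℛ R h), sum_tmul]
  have hLR : toConv iL * toConv iR = toConv comul := by
    ext h
    simp [iL, iR, ← (ℛ R h).eq]
  calc toConv iR * toConv (comul ∘ₗ antipode R)
      = toConv (iL ∘ₗ antipode R) * toConv iL * toConv iR * toConv (comul ∘ₗ antipode R) := by
        rw [hL, one_mul]
    _ = toConv (iL ∘ₗ antipode R) * (toConv iL * toConv iR * toConv (comul ∘ₗ antipode R)) := by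
        simp only [mul_assoc]
    _ = toConv (iL ∘ₗ antipode R) := by rw [hLR, comul_right_inv, mul_one]

end HopfAlgebra

section HopfModule

variable {R H : Type*} [CommSemiring R] [Semiring H] [HopfAlgebra R H]
  {M : Type*} [AddCommMonoid M] [Module R M] (act : M ⊗[R] H →ₗ[R] M) (ρ : M →ₗ[R] M ⊗[R] H)

noncomputable def coinvariantsProjection : M →ₗ[R] M :=
  act ∘ₗ lTensor M (HopfAlgebra.antipode R) ∘ₗ ρ

lemma map_mul_comp_tensorTensorTensorComm_comp_lTensor (f : H →ₗ[R] H ⊗[R] H) :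
    map act (mul' R H) ∘ₗ (tensorTensorTensorComm R M H H H).toLinearMap ∘ₗ
        lTensor (M ⊗[R] H) f ∘ₗ (TensorProduct.assoc R M H H).symm.toLinearMap =
      rTensor H act ∘ₗ (TensorProduct.assoc R M H H).symm.toLinearMap ∘ₗ
        lTensor M (mul' R (H ⊗[R] H) ∘ₗ map (includeRight : H →ₐ[R] H ⊗[R] H).toLinearMap f) := by
  ext m a b
  simp only [AlgebraTensorModule.curry_apply, curry_apply, coe_restrictScalars, coe_comp,
    LinearEquiv.coe_coe, Function.comp_apply, assoc_symm_tmul, lTensor_tmul, map_tmul]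
  induction f b using TensorProduct.induction_on with
  | zero => simp
  | tmul c d => simp
  | add x y hx hy => simp only [tmul_add, map_add, hx, hy]

theorem rho_coinvariantsProjection
    (hcoassoc : rTensor H ρ ∘ₗ ρ =
      (TensorProduct.assoc R M H H).symm.toLinearMap ∘ₗ lTensor M (comul (R := R)) ∘ₗ ρ)
    (hcompat : ρ ∘ₗ act = map act (mul' R H) ∘ₗ (tensorTensorTensorComm R M H H H).toLinearMap ∘ₗ
        map ρ (comul (R := R)))
    (m : M) :
    ρ (coinvariantsProjection act ρ m) = coinvariantsProjection act ρ m ⊗ₜ 1 := by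
  have hS : mul' R (H ⊗[R] H) ∘ₗ map (includeRight : H →ₐ[R] H ⊗[R] H).toLinearMap
      (comul ∘ₗ HopfAlgebra.antipode R) ∘ₗ comul =
      (includeLeft : H →ₐ[R] H ⊗[R] H).toLinearMap ∘ₗ HopfAlgebra.antipode R :=
    congr(ofConv $(HopfAlgebra.includeRight_convMul_comul_comp_antipode))
  calc ρ (coinvariantsProjection act ρ m)
      = map act (mul' R H) (tensorTensorTensorComm R M H H H
          (map ρ comul (lTensor M (HopfAlgebra.antipode R) (ρ m)))) := congr($hcompat _)
    _ = map act (mul' R H) (tensorTensorTensorComm R M H H H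
          (lTensor (M ⊗[R] H) (comul ∘ₗ HopfAlgebra.antipode R) (rTensor H ρ (ρ m)))) := by
        rw [← LinearMap.comp_apply (map ρ comul), map_comp_lTensor,
          ← lTensor_comp_rTensor (f := ρ)]
        rfl
    _ = rTensor H act ((TensorProduct.assoc R M H H).symm (lTensor M (mul' R (H ⊗[R] H) ∘ₗ
          map (includeRight : H →ₐ[R] H ⊗[R] H).toLinearMap (comul ∘ₗ HopfAlgebra.antipode R))
            (lTensor M comul (ρ m)))) := by
        rw [← LinearMap.comp_apply (rTensor H ρ), hcoassoc]
        exact congr($(map_mul_comp_tensorTensorTensorComm_comp_lTensor act _) _)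
    _ = rTensor H act ((TensorProduct.assoc R M H H).symm (lTensor M
          ((includeLeft : H →ₐ[R] H ⊗[R] H).toLinearMap ∘ₗ HopfAlgebra.antipode R) (ρ m))) := by
        rw [← lTensor_comp_apply, comp_assoc, hS]
    _ = coinvariantsProjection act ρ m ⊗ₜ 1 := by
        simp only [coinvariantsProjection, coe_comp, Function.comp_apply]
        induction ρ m using TensorProduct.induction_on with
        | zero => simp
        | tmul n h => simp
        | add x y hx hy => simp only [map_add, add_tmul, hx, hy]

variable (mul : M ⊗[R] M →ₗ[R] M)

theorem coinvariantsProjection_mul_of_rho_eq_tmul_one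
    (hactmul : act ∘ₗ rTensor H mul =
      mul ∘ₗ lTensor M act ∘ₗ (TensorProduct.assoc R M M H).toLinearMap)
    (hrhomul : ρ ∘ₗ mul = map mul (mul' R H) ∘ₗ
      (tensorTensorTensorComm R M H M H).toLinearMap ∘ₗ map ρ ρ)
    {n : M} (hn : ρ n = n ⊗ₜ 1) (y : M) :
    coinvariantsProjection act ρ (mul (n ⊗ₜ y)) = mul (n ⊗ₜ coinvariantsProjection act ρ y) := by
  simp only [coinvariantsProjection, coe_comp, Function.comp_apply]
  rw [← LinearMap.comp_apply ρ, hrhomul]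
  simp only [coe_comp, LinearEquiv.coe_coe, Function.comp_apply, map_tmul, hn]
  induction ρ y using TensorProduct.induction_on with
  | zero => simp
  | tmul a h => simpa using congr($hactmul ((n ⊗ₜ a) ⊗ₜ HopfAlgebra.antipode R h))
  | add u v hu hv => simp only [tmul_add, map_add, hu, hv]

theorem coinvariantsProjection_mul_coinvariantsProjection
    (hact : ∀ (m : M) (h h' : H), act (act (m ⊗ₜ h) ⊗ₜ h') = act (m ⊗ₜ (h * h')))
    (hactmul : act ∘ₗ rTensor H mul =
      mul ∘ₗ lTensor M act ∘ₗ (TensorProduct.assoc R M M H).toLinearMap)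
    (hrhomul : ρ ∘ₗ mul = map mul (mul' R H) ∘ₗ
      (tensorTensorTensorComm R M H M H).toLinearMap ∘ₗ map ρ ρ)
    {y : M} (hy : ρ (coinvariantsProjection act ρ y) = coinvariantsProjection act ρ y ⊗ₜ 1)
    (x : M) :
    coinvariantsProjection act ρ (mul (x ⊗ₜ coinvariantsProjection act ρ y)) =
      coinvariantsProjection act ρ (mul (x ⊗ₜ y)) := by
  have key : ∀ (a : M) (h : H) (w : M ⊗[R] H),
      act (lTensor M (HopfAlgebra.antipode R)
        (map mul (mul' R H) (tensorTensorTensorComm R M H M H ((a ⊗ₜ h) ⊗ₜ w)))) =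
      act (mul (a ⊗ₜ act (lTensor M (HopfAlgebra.antipode R) w)) ⊗ₜ HopfAlgebra.antipode R h) := by
    intro a h w
    induction w using TensorProduct.induction_on with
    | zero => simp
    | tmul b k =>
      have := congr($hactmul ((a ⊗ₜ b) ⊗ₜ HopfAlgebra.antipode R k))
      simp only [coe_comp, Function.comp_apply, rTensor_tmul, LinearEquiv.coe_coe, assoc_tmul,
        lTensor_tmul] at this
      simp [HopfAlgebra.antipode_mul_antidistrib, ← hact, this]
    | add u v hu hv => simp only [tmul_add, add_tmul, map_add, hu, hv]
  set Py := coinvariantsProjection act ρ y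
  simp only [coinvariantsProjection, coe_comp, Function.comp_apply]
  rw [← LinearMap.comp_apply ρ mul, ← LinearMap.comp_apply ρ mul, hrhomul]
  simp only [coe_comp, LinearEquiv.coe_coe, Function.comp_apply, map_tmul, hy]
  induction ρ x using TensorProduct.induction_on with
  | zero => simp
  | tmul a h => rw [key a h (ρ y)]; simp [Py, coinvariantsProjection]
  | add u v hu hv => simp only [add_tmul, map_add, hu, hv]

end HopfModule

theorem rightHopfModuleAlgebra_rotaBaxterAlgebra
    (K : Type*) [Field K] (H : Type*) [Ring H] [HopfAlgebra K H]
    (M : Type*) [AddCommGroup M] [Module K M]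
    (act : M ⊗[K] H →ₗ[K] M) (ρ : M →ₗ[K] M ⊗[K] H) (mul : M ⊗[K] M →ₗ[K] M)
    (hM : IsRightHopfModuleAlgebra K H act ρ mul)
    -- P_R(m) = m₍₀₎ · S(m₍₁₎)
    (P : M →ₗ[K] M)
    (hP : P = act ∘ₗ lTensor M (HopfAlgebra.antipode (R := K)) ∘ₗ ρ) :
    ∀ x y : M, mul (P x ⊗ₜ[K] P y) =
      P (mul (x ⊗ₜ[K] P y)) + P (mul (P x ⊗ₜ[K] y)) - P (mul (x ⊗ₜ[K] y)) := by
  obtain ⟨⟨hact, -, hcoassoc, -, hcompat⟩, -, hactmul, hrhomul⟩ := hM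
  obtain rfl : P = coinvariantsProjection act ρ := hP
  intro x y
  have hcoinv := rho_coinvariantsProjection act ρ hcoassoc hcompat
  rw [coinvariantsProjection_mul_coinvariantsProjection act ρ mul hact hactmul hrhomul (hcoinv y),
    coinvariantsProjection_mul_of_rho_eq_tmul_one act ρ mul hactmul hrhomul (hcoinv x),
    add_sub_cancel_left]
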